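/- Let M be a von Neumann algebra with a faithful normal tracial state τ and fix 1 ≤ p < ∞. For a in the set P of positive invertible elements of M, the geodesic symmetry σ_a : P → P, σ_a(b) = a b^{−1} a, is a bijection of P onto itself which is an isometry for the geodesic distance d_p: for every piecewise smooth curve γ in P, the curve σ_a ∘ γ satisfies ‖(d/dt)(σ_a∘γ)(t)‖_{σ_a(γ(t)),p} = ‖γ'(t)‖_{γ(t),p} for all t, and consequently d_p(σ_a(b), σ_a(c)) = d_p(b,c) for all b, c ∈ P. -/

import Mathlib

open scoped ComplexOrder

section Prelude
variable {M : Type*} [CStarAlgebra M]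

/-- The absolute value `|z| = (z*z)^{1/2}` of an element of a C*-algebra. -/
noncomputable def oabs (z : M) : M := cfc Real.sqrt (star z * z)

/-- Real powers `a ^ t` of a (positive invertible) element, via continuous functional calculus. -/
noncomputable def opow (a : M) (t : ℝ) : M := cfc (fun x : ℝ => x ^ t) a

/-- The logarithm of a (positive invertible) element, via continuous functional calculus. -/
noncomputable def olog (a : M) : M := cfc Real.log a

/-- The exponential given by the usual power series. -/
noncomputable def oexp (x : M) : M := (NormedSpace.expSeries ℂ M).sum x

/-- Positive invertible elements: self-adjoint, invertible, with spectrum in `(0, ∞)`. -/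
def IsPosInv (a : M) : Prop :=
  IsSelfAdjoint a ∧ IsUnit a ∧ spectrum ℝ a ⊆ Set.Ioi (0 : ℝ)

/-- A faithful (normal) tracial state on a von Neumann algebra `M`
(normality, i.e. ultraweak continuity, is not encoded; norm continuity is). -/
structure FiniteTrace (M : Type*) [CStarAlgebra M] where
  toFun : M →ₗ[ℂ] ℂ
  map_one' : toFun 1 = 1
  nonneg' : ∀ x : M, 0 ≤ (toFun (star x * x)).re
  real' : ∀ x : M, (toFun (star x * x)).im = 0
  faithful' : ∀ x : M, toFun (star x * x) = 0 → x = 0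
  tracial' : ∀ x y : M, toFun (x * y) = toFun (y * x)
  continuous' : Continuous toFun

/-- The `p`-norm `‖z‖_p = τ(|z|^p)^{1/p}`. -/
noncomputable def FiniteTrace.pnorm (τ : FiniteTrace M) (p : ℝ) (z : M) : ℝ :=
  (τ.toFun (opow (oabs z) p)).re ^ p⁻¹

/-- Piecewise smooth on `[0,1]`: continuous there, differentiable off a finite set. -/
def PSmooth (γ : ℝ → M) : Prop :=
  ContinuousOn γ (Set.Icc 0 1) ∧
  ∃ s : Finset ℝ, ∀ t ∈ Set.Ioo (0 : ℝ) 1, t ∉ s → DifferentiableAt ℝ γ t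

/-- The Finsler `p`-speed `‖γ(t)^{-1/2} γ'(t) γ(t)^{-1/2}‖_p` of a curve in the positive cone. -/
noncomputable def speed (τ : FiniteTrace M) (p : ℝ) (γ : ℝ → M) (t : ℝ) : ℝ :=
  τ.pnorm p (opow (γ t) (-(1/2 : ℝ)) * deriv γ t * opow (γ t) (-(1/2 : ℝ)))

/-- The Finsler `p`-length of a curve in the positive cone. -/
noncomputable def pLen (τ : FiniteTrace M) (p : ℝ) (γ : ℝ → M) : ℝ :=
  ∫ t in (0:ℝ)..1, speed τ p γ t

/-- The geodesic distance: infimum of `p`-lengths of piecewise smooth curves in the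
positive cone joining `a` to `b`. -/
noncomputable def dp (τ : FiniteTrace M) (p : ℝ) (a b : M) : ℝ :=
  sInf (pLen τ p '' {γ : ℝ → M | PSmooth γ ∧ (∀ t ∈ Set.Icc (0:ℝ) 1, IsPosInv (γ t)) ∧
    γ 0 = a ∧ γ 1 = b})

/-- The geodesic `γ_{a,b}(t) = a^{1/2} (a^{-1/2} b a^{-1/2})^t a^{1/2}`. -/
noncomputable def geo (a b : M) (t : ℝ) : M :=
  opow a (1/2) * opow (opow a (-(1/2 : ℝ)) * b * opow a (-(1/2 : ℝ))) t * opow a (1/2)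

end Prelude

/-!
`σ_a` is an involution of the invertible elements, and `σ_a(b) = x* x` with `x = b^{-1/2} a`
shows that it maps `P` into itself. Along a curve `γ`, the derivative of
`σ_a ∘ γ` is `-a γ⁻¹ γ' γ⁻¹ a`. Writing `c = σ_a(b)`, the element `u = c^{-1/2} a b^{-1/2}`
is unitary, and `c^{-1/2} (a b⁻¹ x b⁻¹ a) c^{-1/2} = u (b^{-1/2} x b^{-1/2}) u*`. Since the
`p`-norm is invariant under unitary conjugation (the trace is, and so is the functional
calculus), speeds agree pointwise. Hence `σ_a` preserves lengths of admissible curves, and, being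
an involution, it maps the admissible curves from `b` to `c` onto those from `σ_a b` to `σ_a c`.
-/

open scoped Ring

section GeodesicSymmetry
variable {M : Type*} [CStarAlgebra M] {a b c : M} {γ : ℝ → M} {t : ℝ}

lemma cfc_unitary_conj (u : unitary M) (f : ℝ → ℝ) {y : M} (hy : IsSelfAdjoint y) :
    cfc f ((u : M) * y * star (u : M)) = u * cfc f y * star (u : M) := by
  let φ := Unitary.conjStarAlgAut ℝ M u
  have hφ : Continuous φ := by
    show Continuous fun x : M => (u : M) * x * (star u : M)
    fun_prop
  by_cases hf : ContinuousOn f (spectrum ℝ y)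
  · exact (StarAlgHomClass.map_cfc φ f y hf hφ hy (hy.map φ)).symm
  · -- `φ` preserves the spectrum, so both sides are the junk value `0`.
    have hf' : ¬ ContinuousOn f (spectrum ℝ (φ y)) := by
      rwa [AlgEquiv.spectrum_eq (R := ℝ)]
    rw [cfc_apply_of_not_continuousOn _ hf, mul_zero, zero_mul]
    exact cfc_apply_of_not_continuousOn _ hf'

lemma oabs_unitary_conj (u : unitary M) (z : M) :
    oabs ((u : M) * z * star (u : M)) = u * oabs z * star (u : M) := by
  have hconj : star ((u : M) * z * star (u : M)) * (u * z * star (u : M)) =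
      u * (star z * z) * star (u : M) := by
    simp only [star_mul, star_star, mul_assoc]
    rw [← mul_assoc (star (u : M)) u, Unitary.coe_star_mul_self, one_mul]
  rw [oabs, hconj, cfc_unitary_conj u _ (.star_mul_self z), oabs]

lemma FiniteTrace.pnorm_unitary_conj (τ : FiniteTrace M) (p : ℝ) (u : unitary M) (z : M) :
    τ.pnorm p ((u : M) * z * star (u : M)) = τ.pnorm p z := by
  rw [pnorm, opow, oabs_unitary_conj, cfc_unitary_conj u _ (y := oabs z) (cfc_predicate _ _),
    τ.tracial', ← mul_assoc, Unitary.coe_star_mul_self, one_mul, pnorm, opow]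

lemma FiniteTrace.pnorm_neg (τ : FiniteTrace M) (p : ℝ) (z : M) :
    τ.pnorm p (-z) = τ.pnorm p z := by
  rw [pnorm, oabs, star_neg, neg_mul_neg, pnorm, oabs]

lemma isSelfAdjoint_opow (c : M) (t : ℝ) : IsSelfAdjoint (opow c t) := cfc_predicate _ _

lemma IsPosInv.continuousOn_rpow (hc : IsPosInv c) (t : ℝ) :
    ContinuousOn (fun x : ℝ => x ^ t) (spectrum ℝ c) := fun x hx =>
  (Real.continuousAt_rpow_const x t (.inl (hc.2.2 hx).ne')).continuousWithinAt

lemma IsPosInv.opow_mul_opow (hc : IsPosInv c) (s t : ℝ) :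
    opow c s * opow c t = opow c (s + t) := by
  rw [opow, opow, ← cfc_mul _ _ c (hc.continuousOn_rpow s) (hc.continuousOn_rpow t)]
  exact cfc_congr fun x hx => (Real.rpow_add (hc.2.2 hx) s t).symm

lemma IsPosInv.opow_zero (hc : IsPosInv c) : opow c 0 = 1 := by
  rw [opow, cfc_congr fun x _ => Real.rpow_zero x, cfc_const_one ℝ c hc.1]

lemma IsPosInv.opow_one (hc : IsPosInv c) : opow c 1 = c := by
  rw [opow, cfc_congr fun x _ => Real.rpow_one x, cfc_id' ℝ c hc.1]

lemma IsPosInv.opow_neg_one (hc : IsPosInv c) : opow c (-1) = c⁻¹ʳ := by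
  have hleft := hc.opow_mul_opow (-1) 1
  have hright := hc.opow_mul_opow 1 (-1)
  norm_num [hc.opow_one, hc.opow_zero] at hleft hright
  exact (Ring.inverse_unit ⟨c, opow c (-1), hright, hleft⟩).symm

lemma IsPosInv.opow_neg_half_mul_self (hc : IsPosInv c) :
    opow c (-(1/2)) * opow c (-(1/2)) = c⁻¹ʳ := by
  rw [hc.opow_mul_opow, ← hc.opow_neg_one]
  norm_num

lemma IsPosInv.opow_neg_half_conj_self (hc : IsPosInv c) :
    opow c (-(1/2)) * c * opow c (-(1/2)) = 1 := by
  nth_rw 2 [← hc.opow_one]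
  rw [hc.opow_mul_opow, hc.opow_mul_opow]
  norm_num [hc.opow_zero]

noncomputable def geodSymm (a b : M) : M := a * b⁻¹ʳ * a

lemma geodSymm_geodSymm (ha : IsUnit a) (hb : IsUnit b) : geodSymm a (geodSymm a b) = b := by
  obtain ⟨A, rfl⟩ := ha
  obtain ⟨B, rfl⟩ := hb
  have hunits : geodSymm (A : M) B = ↑(A * B⁻¹ * A) := by simp [geodSymm]
  rw [hunits, geodSymm, Ring.inverse_unit]
  simp [mul_assoc]

lemma isUnit_geodSymm_iff (ha : IsUnit a) : IsUnit (geodSymm a b) ↔ IsUnit b := by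
  obtain ⟨A, rfl⟩ := ha
  simp [geodSymm, Units.isUnit_mul_units, Units.isUnit_units_mul]

lemma geodSymm_eq_star_mul_self (ha : IsSelfAdjoint a) (hb : IsPosInv b) :
    geodSymm a b = star (opow b (-(1/2)) * a) * (opow b (-(1/2)) * a) := by
  rw [star_mul, ha.star_eq, (isSelfAdjoint_opow b _).star_eq, geodSymm,
    ← hb.opow_neg_half_mul_self]
  simp only [mul_assoc]

lemma isPosInv_geodSymm (ha : IsPosInv a) (hb : IsPosInv b) : IsPosInv (geodSymm a b) := by
  have hunit : IsUnit (geodSymm a b) := (isUnit_geodSymm_iff ha.2.1).mpr hb.2.1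
  rw [geodSymm_eq_star_mul_self ha.1 hb] at hunit ⊢
  refine ⟨.star_mul_self _, hunit, fun x hx => ?_⟩
  exact (spectrum_star_mul_self_nonneg x hx).lt_of_ne
    (by rintro rfl; exact (spectrum.zero_notMem_iff ℝ).mpr hunit hx)

lemma bijOn_geodSymm (ha : IsPosInv a) :
    Set.BijOn (geodSymm a) {b : M | IsPosInv b} {b : M | IsPosInv b} := by
  have hmaps : Set.MapsTo (geodSymm a) {b : M | IsPosInv b} {b : M | IsPosInv b} :=
    fun _ hb => isPosInv_geodSymm ha hb
  have hinvol : Set.InvOn (geodSymm a) (geodSymm a) {b : M | IsPosInv b} {b : M | IsPosInv b} :=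
    ⟨fun _ hb => geodSymm_geodSymm ha.2.1 hb.2.1, fun _ hb => geodSymm_geodSymm ha.2.1 hb.2.1⟩
  exact hinvol.bijOn hmaps hmaps

lemma geodSymm_conj_mem_unitary (ha : IsPosInv a) (hb : IsPosInv b) :
    opow (geodSymm a b) (-(1/2)) * a * opow b (-(1/2)) ∈ unitary M := by
  have hc := isPosInv_geodSymm ha hb
  rw [Unitary.mem_iff]
  simp only [star_mul, (isSelfAdjoint_opow _ _).star_eq, ha.1.star_eq]
  constructor
  · calc _ = opow b (-(1/2)) * (a * (opow (geodSymm a b) (-(1/2)) *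
          opow (geodSymm a b) (-(1/2))) * a) * opow b (-(1/2)) := by simp only [mul_assoc]
      _ = 1 := by
        rw [hc.opow_neg_half_mul_self]
        change opow b _ * geodSymm a (geodSymm a b) * opow b _ = 1
        rw [geodSymm_geodSymm ha.2.1 hb.2.1, hb.opow_neg_half_conj_self]
  · calc _ = opow (geodSymm a b) (-(1/2)) * (a * (opow b (-(1/2)) * opow b (-(1/2))) * a) *
          opow (geodSymm a b) (-(1/2)) := by simp only [mul_assoc]
      _ = 1 := by
        rw [hb.opow_neg_half_mul_self]
        exact hc.opow_neg_half_conj_self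

lemma FiniteTrace.pnorm_geodSymm_tangent (τ : FiniteTrace M) (p : ℝ) (ha : IsPosInv a)
    (hb : IsPosInv b) (x : M) :
    τ.pnorm p (opow (geodSymm a b) (-(1/2)) * (a * b⁻¹ʳ * x * b⁻¹ʳ * a) *
        opow (geodSymm a b) (-(1/2))) =
      τ.pnorm p (opow b (-(1/2)) * x * opow b (-(1/2))) := by
  let u : unitary M := ⟨_, geodSymm_conj_mem_unitary ha hb⟩
  have hconj : opow (geodSymm a b) (-(1/2)) * (a * b⁻¹ʳ * x * b⁻¹ʳ * a) *
      opow (geodSymm a b) (-(1/2)) =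
        u * (opow b (-(1/2)) * x * opow b (-(1/2))) * star (u : M) := by
    simp only [u, star_mul, (isSelfAdjoint_opow _ _).star_eq, ha.1.star_eq,
      ← hb.opow_neg_half_mul_self, mul_assoc]
  rw [hconj, τ.pnorm_unitary_conj]

lemma HasDerivAt.geodSymm {γ' : M} (a : M) (hγ : HasDerivAt γ γ' t) (hu : IsUnit (γ t)) :
    HasDerivAt (fun s => geodSymm a (γ s)) (-(a * (γ t)⁻¹ʳ * γ' * (γ t)⁻¹ʳ * a)) t := by
  obtain ⟨U, hU⟩ := hu
  have hinv : HasDerivAt (fun s => (γ s)⁻¹ʳ) (-((γ t)⁻¹ʳ * γ' * (γ t)⁻¹ʳ)) t := by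
    have := (hU ▸ hasFDerivAt_ringInverse (𝕜 := ℝ) U).comp_hasDerivAt t hγ
    simpa [← hU, mul_assoc, Function.comp_def] using this
  have h := (hinv.const_mul a).mul_const a
  rw [mul_neg, neg_mul] at h
  simpa only [_root_.geodSymm, mul_assoc] using h

lemma differentiableAt_geodSymm_comp_iff (ha : IsUnit a) (hu : IsUnit (γ t)) :
    DifferentiableAt ℝ (fun s => geodSymm a (γ s)) t ↔ DifferentiableAt ℝ γ t := by
  refine ⟨fun hδ => ?_, fun hγ => (hγ.hasDerivAt.geodSymm a hu).differentiableAt⟩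
  have hδu : IsUnit (geodSymm a (γ t)) := (isUnit_geodSymm_iff ha).mpr hu
  have hγ_eq : (fun s => geodSymm a (geodSymm a (γ s))) =ᶠ[nhds t] γ := by
    filter_upwards [hδ.continuousAt.eventually_mem (Units.isOpen.mem_nhds hδu)] with s hs
    exact geodSymm_geodSymm ha ((isUnit_geodSymm_iff ha).mp hs)
  exact hγ_eq.differentiableAt_iff.mp (hδ.hasDerivAt.geodSymm a hδu).differentiableAt

lemma speed_geodSymm_comp (τ : FiniteTrace M) (p : ℝ) (ha : IsPosInv a) (hγ : IsPosInv (γ t)) :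
    speed τ p (fun s => geodSymm a (γ s)) t = speed τ p γ t := by
  by_cases hdiff : DifferentiableAt ℝ γ t
  · simp only [speed, (hdiff.hasDerivAt.geodSymm a hγ.2.1).deriv, mul_neg, neg_mul, τ.pnorm_neg]
    exact τ.pnorm_geodSymm_tangent p ha hγ _
  · have hdiff' := mt (differentiableAt_geodSymm_comp_iff ha.2.1 hγ.2.1).mp hdiff
    simp only [speed, deriv_zero_of_not_differentiableAt hdiff,
      deriv_zero_of_not_differentiableAt hdiff', mul_zero, zero_mul]

lemma PSmooth.geodSymm_comp (ha : IsUnit a) (hγ : PSmooth γ)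
    (hu : ∀ t ∈ Set.Icc (0:ℝ) 1, IsUnit (γ t)) : PSmooth (fun s => geodSymm a (γ s)) := by
  obtain ⟨hcont, s, hdiff⟩ := hγ
  refine ⟨fun t ht => ?_, s, fun t ht hts => ?_⟩
  · obtain ⟨U, hU⟩ := hu t ht
    have hinv : ContinuousAt Ring.inverse (γ t) := hU ▸ NormedRing.inverse_continuousAt U
    exact (continuousWithinAt_const.mul (hinv.comp_continuousWithinAt (hcont t ht))).mul
      continuousWithinAt_const
  · exact (differentiableAt_geodSymm_comp_iff ha (hu t (Set.mem_Icc_of_Ioo ht))).mpr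
      (hdiff t ht hts)

lemma pLen_geodSymm_comp (τ : FiniteTrace M) (p : ℝ) (ha : IsPosInv a)
    (hpos : ∀ t ∈ Set.Icc (0:ℝ) 1, IsPosInv (γ t)) :
    pLen τ p (fun s => geodSymm a (γ s)) = pLen τ p γ :=
  intervalIntegral.integral_congr fun t ht =>
    speed_geodSymm_comp τ p ha (hpos t (by rwa [Set.uIcc_of_le zero_le_one] at ht))

def posPaths (b c : M) : Set (ℝ → M) :=
  {γ | PSmooth γ ∧ (∀ t ∈ Set.Icc (0:ℝ) 1, IsPosInv (γ t)) ∧ γ 0 = b ∧ γ 1 = c}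

lemma geodSymm_comp_mem_posPaths (ha : IsPosInv a) (hγ : γ ∈ posPaths b c) :
    (fun s => geodSymm a (γ s)) ∈ posPaths (geodSymm a b) (geodSymm a c) := by
  obtain ⟨hsmooth, hpos, rfl, rfl⟩ := hγ
  exact ⟨hsmooth.geodSymm_comp ha.2.1 fun t ht => (hpos t ht).2.1,
    fun t ht => isPosInv_geodSymm ha (hpos t ht), rfl, rfl⟩

lemma dp_geodSymm (τ : FiniteTrace M) (p : ℝ) (ha : IsPosInv a) (hb : IsPosInv b)
    (hc : IsPosInv c) : dp τ p (geodSymm a b) (geodSymm a c) = dp τ p b c := by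
  have hlen : ∀ b c : M,
      pLen τ p '' posPaths b c ⊆ pLen τ p '' posPaths (geodSymm a b) (geodSymm a c) := by
    rintro b c _ ⟨γ, hγ, rfl⟩
    exact ⟨_, geodSymm_comp_mem_posPaths ha hγ, pLen_geodSymm_comp τ p ha hγ.2.1⟩
  have hback := hlen (geodSymm a b) (geodSymm a c)
  rw [geodSymm_geodSymm ha.2.1 hb.2.1, geodSymm_geodSymm ha.2.1 hc.2.1] at hback
  exact congrArg sInf (hback.antisymm (hlen b c))

end GeodesicSymmetry

theorem geodesic_symmetry_isometry_general
    {M : Type*} [CStarAlgebra M] (τ : FiniteTrace M) (p : ℝ)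
    (a : M) (ha : IsPosInv a) :
    Set.BijOn (fun b : M => a * Ring.inverse b * a) {b : M | IsPosInv b} {b : M | IsPosInv b} ∧
    (∀ γ : ℝ → M, PSmooth γ → (∀ t ∈ Set.Icc (0:ℝ) 1, IsPosInv (γ t)) →
      ∀ t ∈ Set.Icc (0:ℝ) 1,
        speed τ p (fun s => a * Ring.inverse (γ s) * a) t = speed τ p γ t) ∧
    (∀ b c : M, IsPosInv b → IsPosInv c →
      dp τ p (a * Ring.inverse b * a) (a * Ring.inverse c * a) = dp τ p b c) :=
  ⟨bijOn_geodSymm ha, fun _ _ hpos t ht => speed_geodSymm_comp τ p ha (hpos t ht),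
    fun _ _ hb hc => dp_geodSymm τ p ha hb hc⟩

/-- the geodesic symmetry `σ_a(b) = a b⁻¹ a` is a bijection of the positive
invertible elements preserving speeds of piecewise smooth curves, hence an isometry of `d_p`. -/
theorem geodesic_symmetry_isometry
    {M : Type*} [CStarAlgebra M] (τ : FiniteTrace M) (p : ℝ) (hp : 1 ≤ p)
    (a : M) (ha : IsPosInv a) :
    Set.BijOn (fun b : M => a * Ring.inverse b * a) {b : M | IsPosInv b} {b : M | IsPosInv b} ∧
    (∀ γ : ℝ → M, PSmooth γ → (∀ t ∈ Set.Icc (0:ℝ) 1, IsPosInv (γ t)) →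
      ∀ t ∈ Set.Icc (0:ℝ) 1,
        speed τ p (fun s => a * Ring.inverse (γ s) * a) t = speed τ p γ t) ∧
    (∀ b c : M, IsPosInv b → IsPosInv c →
      dp τ p (a * Ring.inverse b * a) (a * Ring.inverse c * a) = dp τ p b c) :=
  geodesic_symmetry_isometry_general τ p a ha
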